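/- arXiv:1911.07691 — 4 statements merged into one kernel-verified Lean document; each statement's English description precedes it below -/
import Mathlib

section
/- Let k be a field, Γ the Kronecker quiver (two arrows p, q from vertex u to vertex v), and kΓ its path algebra. The functor sending a linear relation (V, R) to the representation (π_p, π_q : R → V), where π_p and π_q are the restrictions to R of the two projections V ⊕ V → V, is a fully faithful additive functor from the category of linear relations to the category of k-representations of Γ. -/
section

variable {k : Type*} [Field k]

/-- A morphism of linear relations `(V, R) → (W, S)`: a linear map preserving the relation. -/
def IsRelHom {V W : Type*} [AddCommGroup V] [Module k V] [AddCommGroup W] [Module k W]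
    (R : Submodule k (V × V)) (S : Submodule k (W × W)) (f : V →ₗ[k] W) : Prop :=
  ∀ x ∈ R, ((f x.1, f x.2) : W × W) ∈ S

/-- A morphism of Kronecker representations `(π₁, π₂ : R → V) → (π₁, π₂ : S → W)`:
a pair `(a, b)` of linear maps commuting with the two projections. -/
def IsKroneckerHom {V W : Type*} [AddCommGroup V] [Module k V] [AddCommGroup W] [Module k W]
    (R : Submodule k (V × V)) (S : Submodule k (W × W))
    (a : ↥R →ₗ[k] ↥S) (b : V →ₗ[k] W) : Prop :=
  ∀ x : ↥R, ((a x : W × W)).1 = b ((x : V × V)).1 ∧ ((a x : W × W)).2 = b ((x : V × V)).2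

end

/-!
Since `S ↪ W × W` is injective, a Kronecker morphism `(a, b)` is determined by `b`: it says exactly
that `a` is `b × b` restricted to `R → S`. Faithfulness, fullness and additivity all follow
from this identity of linear maps `R → W × W`.
-/

namespace LinearRelation

variable {k V W : Type*} [Field k] [AddCommGroup V] [Module k V] [AddCommGroup W] [Module k W]
  {R : Submodule k (V × V)} {S : Submodule k (W × W)}

def kroneckerMap {f : V →ₗ[k] W} (hf : IsRelHom R S f) : ↥R →ₗ[k] ↥S :=
  (f.prodMap f).restrict hf

theorem isKroneckerHom_kroneckerMap {f : V →ₗ[k] W} (hf : IsRelHom R S f) :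
    IsKroneckerHom R S (kroneckerMap hf) f :=
  fun _ => ⟨rfl, rfl⟩

theorem isKroneckerHom_iff {a : ↥R →ₗ[k] ↥S} {b : V →ₗ[k] W} :
    IsKroneckerHom R S a b ↔ S.subtype ∘ₗ a = b.prodMap b ∘ₗ R.subtype := by
  simp only [IsKroneckerHom, LinearMap.ext_iff, Prod.ext_iff, LinearMap.coe_comp,
    Function.comp_apply, Submodule.coe_subtype, LinearMap.prodMap_apply]

theorem IsKroneckerHom.unique {a a' : ↥R →ₗ[k] ↥S} {b : V →ₗ[k] W}
    (h : IsKroneckerHom R S a b) (h' : IsKroneckerHom R S a' b) : a = a' := by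
  rw [isKroneckerHom_iff] at h h'
  exact LinearMap.ext fun x => S.subtype_injective (LinearMap.congr_fun (h.trans h'.symm) x)

theorem IsKroneckerHom.isRelHom {a : ↥R →ₗ[k] ↥S} {b : V →ₗ[k] W}
    (h : IsKroneckerHom R S a b) : IsRelHom R S b := fun x hx => by
  rw [isKroneckerHom_iff] at h
  have hx' : b.prodMap b x = S.subtype (a ⟨x, hx⟩) := (LinearMap.congr_fun h ⟨x, hx⟩).symm
  exact (hx' ▸ (a ⟨x, hx⟩).2 : b.prodMap b x ∈ S)

theorem IsKroneckerHom.add {a a' : ↥R →ₗ[k] ↥S} {b b' : V →ₗ[k] W}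
    (h : IsKroneckerHom R S a b) (h' : IsKroneckerHom R S a' b') :
    IsKroneckerHom R S (a + a') (b + b') := by
  rw [isKroneckerHom_iff] at h h' ⊢
  rw [LinearMap.comp_add, h, h', LinearMap.prodMap_add, LinearMap.add_comp]

end LinearRelation

open LinearRelation in
/-- The functor `k-Rel → k-Rep(Γ)` sending a linear relation `(V, R)` to the
Kronecker representation `(π_p, π_q : R → V)`, and a morphism `f` to the pair
`(f|_R, f)`, is fully faithful and additive.  Concretely, on each hom-set:
every relation morphism `f` induces a (unique) Kronecker morphism `(a, f)`;
every Kronecker morphism `(a, b)` arises this way (fullness: `b` is a relation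
morphism and `a` is determined by `b`); faithfulness is the uniqueness of the
second component; and the assignment is additive. -/
theorem stmt4 (k : Type*) [Field k] (V W : Type*)
    [AddCommGroup V] [Module k V] [AddCommGroup W] [Module k W]
    (R : Submodule k (V × V)) (S : Submodule k (W × W)) :
    -- the functor is well defined on morphisms
    (∀ f : V →ₗ[k] W, IsRelHom R S f → ∃ a : ↥R →ₗ[k] ↥S, IsKroneckerHom R S a f) ∧
    -- faithfulness (and uniqueness of the induced pair)
    (∀ (a a' : ↥R →ₗ[k] ↥S) (b : V →ₗ[k] W),
      IsKroneckerHom R S a b → IsKroneckerHom R S a' b → a = a') ∧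
    -- fullness: every Kronecker morphism comes from a relation morphism
    (∀ (a : ↥R →ₗ[k] ↥S) (b : V →ₗ[k] W), IsKroneckerHom R S a b → IsRelHom R S b) ∧
    -- additivity
    (∀ (a a' : ↥R →ₗ[k] ↥S) (b b' : V →ₗ[k] W),
      IsKroneckerHom R S a b → IsKroneckerHom R S a' b' →
        IsKroneckerHom R S (a + a') (b + b')) :=
  ⟨fun _ hf => ⟨kroneckerMap hf, isKroneckerHom_kroneckerMap hf⟩,
    fun _ _ _ h h' => h.unique h',
    fun _ _ h => h.isRelHom,
    fun _ _ _ _ h h' => h.add h'⟩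
end

section
/- Let Λ be a finite-dimensional algebra over a field k and let M be a complex of projective Λ-modules with im(d^n) ⊆ rad(M^{n+1}) for all n (a homotopically minimal complex). If a chain endomorphism τ of M is homotopic to the identity, then each component τ^n : M^n → M^n is an isomorphism of Λ-modules. -/
/-!
Write `J` for the Jacobson radical of `Λ`. Since `τ - 1 = d h + h d` and every differential lands
in `J • M`, the endomorphism `g = τ^n - 1` of `M^n` maps `M^n` into `J • M^n`, hence `J^i • M^n`
into `J^(i+1) • M^n`. The radical of the Artinian ring `Λ` is nilpotent, so `g` is nilpotent and
`τ^n = 1 + g` is invertible.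
-/

open CategoryTheory

universe u

namespace LinearMap

variable {R M : Type*} [Ring R] [AddCommGroup M] [Module R M]

theorem range_pow_le_pow_smul_top {I : Ideal R} {g : Module.End R M}
    (hg : range g ≤ I • ⊤) (n : ℕ) : range (g ^ n) ≤ I ^ n • ⊤ := by
  induction n with
  | zero => simp [Submodule.pow_zero]
  | succ n ih =>
    calc range (g ^ (n + 1)) = Submodule.map g (range (g ^ n)) := by
          rw [pow_succ', Module.End.mul_eq_comp, range_comp]
      _ ≤ Submodule.map g (I ^ n • ⊤) := Submodule.map_mono ih
      _ = I ^ n • range g := by rw [Submodule.map_smul'', Submodule.map_top]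
      _ ≤ I ^ (n + 1) • ⊤ := by
          rw [Submodule.pow_succ, Submodule.mul_smul]
          exact Submodule.smul_mono le_rfl hg

theorem isNilpotent_of_range_le_smul_top {I : Ideal R} (hI : IsNilpotent I)
    {g : Module.End R M} (hg : range g ≤ I • ⊤) : IsNilpotent g := by
  obtain ⟨n, hn⟩ := hI
  refine ⟨n, range_eq_bot.mp (le_bot_iff.mp ?_)⟩
  simpa [hn] using range_pow_le_pow_smul_top hg n

end LinearMap

theorem Module.End.bijective_of_range_sub_one_le_smul_top {R M : Type*} [Ring R]
    [AddCommGroup M] [Module R M] {I : Ideal R} (hI : IsNilpotent I) {f : Module.End R M}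
    (hf : LinearMap.range (f - 1) ≤ I • ⊤) : Function.Bijective f := by
  rw [← Module.End.isUnit_iff]
  simpa using (LinearMap.isNilpotent_of_range_le_smul_top hI hf).isUnit_one_add

theorem Submodule.map_smul_top_le {R M N : Type*} [Ring R] [AddCommGroup M] [Module R M]
    [AddCommGroup N] [Module R N] (I : Ideal R) (φ : M →ₗ[R] N) :
    (I • ⊤ : Submodule R M).map φ ≤ I • ⊤ := by
  rw [Submodule.map_smul'']
  exact Submodule.smul_mono le_rfl le_top

theorem Homotopy.range_sub_le_smul_top {R : Type u} [Ring R] {ι : Type*} {c : ComplexShape ι}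
    {C D : HomologicalComplex (ModuleCat.{u} R) c} {f g : C ⟶ D} (h : Homotopy f g) {I : Ideal R}
    (hC : ∀ i j, LinearMap.range (C.d i j).hom ≤ I • ⊤)
    (hD : ∀ i j, LinearMap.range (D.d i j).hom ≤ I • ⊤) (i : ι) :
    LinearMap.range (f.f i - g.f i).hom ≤ I • ⊤ := by
  rw [h.comm i, add_sub_cancel_right, ModuleCat.hom_add]
  refine (LinearMap.range_add_le _ _).trans (sup_le ?_ ?_)
  · change LinearMap.range (C.d i (c.next i) ≫ h.hom (c.next i) i).hom ≤ _
    rw [ModuleCat.hom_comp, LinearMap.range_comp]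
    exact (Submodule.map_mono (hC _ _)).trans (Submodule.map_smul_top_le _ _)
  · change LinearMap.range (h.hom i (c.prev i) ≫ D.d (c.prev i) i).hom ≤ _
    rw [ModuleCat.hom_comp]
    exact (LinearMap.range_comp_le_range _ _).trans (hD _ _)

theorem CochainComplex.range_d_le_of_range_d_succ_le {R : Type u} [Ring R]
    {M : CochainComplex (ModuleCat.{u} R) ℤ} {I : Ideal R}
    (h : ∀ n : ℤ, LinearMap.range (M.d n (n + 1)).hom ≤ I • ⊤) (i j : ℤ) :
    LinearMap.range (M.d i j).hom ≤ I • ⊤ := by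
  by_cases hij : i + 1 = j
  · subst hij; exact h i
  · simp [M.shape i j hij]

theorem stmt9_general (k : Type u) [Field k] (Λ : Type u) [Ring Λ] [Algebra k Λ]
    [FiniteDimensional k Λ]
    (M : CochainComplex (ModuleCat.{u} Λ) ℤ)
    (hmin : ∀ n : ℤ, LinearMap.range (M.d n (n + 1)).hom ≤
      Ideal.jacobson (⊥ : Ideal Λ) • (⊤ : Submodule Λ (M.X (n + 1))))
    (τ : M ⟶ M) (hτ : Nonempty (Homotopy τ (𝟙 M))) :
    ∀ n : ℤ, Function.Bijective (τ.f n) := by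
  intro n
  obtain ⟨h⟩ := hτ
  have : IsArtinianRing Λ := isArtinian_of_tower k inferInstance
  have hd := CochainComplex.range_d_le_of_range_d_succ_le hmin
  exact Module.End.bijective_of_range_sub_one_le_smul_top
    IsArtinianRing.isNilpotent_jacobson_bot (h.range_sub_le_smul_top hd hd n)

/-- Let `Λ` be a finite-dimensional algebra over a field `k` and `M` a
homotopically minimal complex of projective `Λ`-modules (i.e. `im(d^n) ⊆ rad(M^{n+1})`
for all `n`, where `rad` is the Jacobson radical).  If a chain endomorphism `τ` of `M`
is homotopic to the identity, then every component `τ^n` is an isomorphism. -/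
theorem stmt9 (k : Type u) [Field k] (Λ : Type u) [Ring Λ] [Algebra k Λ]
    [FiniteDimensional k Λ]
    (M : CochainComplex (ModuleCat.{u} Λ) ℤ)
    (hproj : ∀ n : ℤ, Module.Projective Λ (M.X n))
    (hmin : ∀ n : ℤ, LinearMap.range (M.d n (n + 1)).hom ≤
      Ideal.jacobson (⊥ : Ideal Λ) • (⊤ : Submodule Λ (M.X (n + 1))))
    (τ : M ⟶ M) (hτ : Nonempty (Homotopy τ (𝟙 M))) :
    ∀ n : ℤ, Function.Bijective (τ.f n) :=
  stmt9_general k Λ M hmin τ hτ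
end

section
/- Let T be a compactly generated triangulated category with all small coproducts. If M is a Σ-pure-injective object of T, then for every compact object X of T, every descending chain φ₁(M) ⊇ φ₂(M) ⊇ … of pp-definable subgroups of M of sort X eventually stabilises. -/
/-!
If the chain does not stabilise, pass to a strictly descending subsequence and pick
`bₖ ∈ M aₖ \ M aₖ₊₁`. The infinite sum `x = ∑ₖ bₖ ιₖ : X ⟶ ∐_ℕ M` would satisfy
`x - ∑_{k<m} bₖ ιₖ ∈ (∐ M) aₘ` for every `m`. It does not exist, but every finite part of this
system is solvable, and pure-injectivity of `∐ M` produces a genuine solution `x`: kill the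
relations in a weak cokernel (a cone), into which `∐ M` embeds purely, and retract. As `X` is
compact, `x` has a zero coordinate `m`, and reading the `(m+1)`-st equation at coordinate `m`
gives `bₘ ∈ M aₘ₊₁`.
-/

open CategoryTheory CategoryTheory.Limits

universe v u

namespace TriPurity

variable {C : Type u} [Category.{v} C] [Preadditive C]

/-- The additive map `(X ⟶ f i) →+ (X ⟶ ∐ f)` given by composing with the coproduct
inclusion. -/
@[simps]

noncomputable def compIota {I : Type v} (f : I → C) [HasCoproduct f] (X : C) (i : I) :
    (X ⟶ f i) →+ (X ⟶ ∐ f) where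
  toFun g := g ≫ Sigma.ι f i
  map_zero' := by simp
  map_add' _ _ := by simp [Preadditive.add_comp]

/-- An object `X` is compact if `Hom(X, −)` commutes with small coproducts: the
canonical map `⊕_i Hom(X, f i) → Hom(X, ∐ f)` is bijective for every small family. -/
def IsCompactObj (X : C) : Prop :=
  ∀ (I : Type v) (_ : DecidableEq I) (f : I → C) (_ : HasCoproduct f),
    Function.Bijective (fun g : Π₀ i, (X ⟶ f i) =>
      DFinsupp.sumAddHom (compIota f X) g)

/-- A morphism `h : L ⟶ M` is a pure monomorphism if `Hom(X, h)` is injective for every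
compact object `X`. -/
def IsPureMonoT {L M : C} (h : L ⟶ M) : Prop :=
  ∀ X : C, IsCompactObj X → Function.Injective (fun g : X ⟶ L => g ≫ h)

/-- An object `M` is pure-injective if every pure monomorphism out of `M` is a section. -/
def IsPureInjectiveT (M : C) : Prop :=
  ∀ (N : C) (h : M ⟶ N), IsPureMonoT h → ∃ r : N ⟶ M, h ≫ r = 𝟙 M

/-- `M` is Σ-pure-injective if every small coproduct of copies of `M` is pure-injective. -/
def IsSigmaPureInjectiveT [HasCoproducts.{v} C] (M : C) : Prop :=
  ∀ I : Type v, IsPureInjectiveT (∐ fun _ : I => M)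

/-- `T` is compactly generated: some set of compact objects detects nonzero objects. -/
def CompactlyGenerated (C : Type u) [Category.{v} C] [Preadditive C] : Prop :=
  ∃ G : Set C, (∀ X ∈ G, IsCompactObj X) ∧
    ∀ M : C, (∀ X ∈ G, ∀ f : X ⟶ M, f = 0) → IsZero M

end TriPurity

open TriPurity

namespace TriPurity

variable {C : Type u} [Category.{v} C] [Preadditive C]

def ppDefinable (M : C) {X Y : C} (a : X ⟶ Y) : Set (X ⟶ M) :=
  {g | ∃ f : Y ⟶ M, g = a ≫ f}

def HasWeakCokernels (C : Type u) [Category.{v} C] [Preadditive C] : Prop :=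
  ∀ {A B : C} (f : A ⟶ B), ∃ (Q : C) (q : B ⟶ Q), f ≫ q = 0 ∧
    ∀ {W : C} (φ : B ⟶ W), f ≫ φ = 0 → ∃ φ' : Q ⟶ W, φ = q ≫ φ'

theorem Pretriangulated.hasWeakCokernels [HasZeroObject C] [HasShift C ℤ]
    [∀ n : ℤ, (shiftFunctor C n).Additive] [Pretriangulated C] : HasWeakCokernels C := by
  intro A B f
  obtain ⟨Q, q, _, hT⟩ := Pretriangulated.distinguished_cocone_triangle f
  exact ⟨Q, q, Pretriangulated.comp_distTriang_mor_zero₁₂ _ hT,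
    fun φ hφ => Pretriangulated.Triangle.yoneda_exact₂ _ hT φ hφ⟩

section Coordinates

variable {I : Type v} [DecidableEq I] (f : I → C) [HasCoproduct f]

theorem sumAddHom_compIota_comp_π {X : C} (d : Π₀ i, (X ⟶ f i)) (k : I) :
    DFinsupp.sumAddHom (compIota f X) d ≫ Sigma.π f k = d k := by
  induction d using DFinsupp.induction with
  | h0 => simp
  | ha i x d _ _ ih =>
    rw [map_add, DFinsupp.sumAddHom_single, Preadditive.add_comp, ih, DFinsupp.add_apply,
      compIota_apply, Category.assoc]
    by_cases hik : i = k
    · subst hik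
      simp
    · rw [Sigma.ι_π_of_ne f hik, comp_zero, DFinsupp.single_eq_of_ne (Ne.symm hik), zero_add]

variable {f}

theorem IsCompactObj.hom_ext {X : C} (hX : IsCompactObj X) {g g' : X ⟶ ∐ f}
    (h : ∀ i, g ≫ Sigma.π f i = g' ≫ Sigma.π f i) : g = g' := by
  obtain ⟨d, rfl⟩ := (hX I inferInstance f inferInstance).2 g
  obtain ⟨d', rfl⟩ := (hX I inferInstance f inferInstance).2 g'
  congr 1
  ext i
  simpa only [sumAddHom_compIota_comp_π] using h i

theorem IsCompactObj.exists_comp_π_eq_zero [Infinite I] {X : C} (hX : IsCompactObj X)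
    (g : X ⟶ ∐ f) : ∃ i, g ≫ Sigma.π f i = 0 := by
  classical
  obtain ⟨d, rfl⟩ := (hX I inferInstance f inferInstance).2 g
  obtain ⟨i, hi⟩ := Infinite.exists_notMem_finset d.support
  exact ⟨i, by rwa [sumAddHom_compIota_comp_π, ← DFinsupp.notMem_support_iff]⟩

theorem isPureMonoT_of_comp_eq_π {P : C} (ν : ∐ f ⟶ P) (p : ∀ i, P ⟶ f i)
    (hνp : ∀ i, ν ≫ p i = Sigma.π f i) : IsPureMonoT ν := by
  intro W hW g g' hgg'
  refine hW.hom_ext fun i => ?_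
  rw [← hνp, ← Category.assoc, ← Category.assoc]
  exact congrArg (· ≫ p i) hgg'

theorem IsPureInjectiveT.exists_retraction (hwc : HasWeakCokernels C)
    (hN : IsPureInjectiveT (∐ f)) {P : C} (ι : ∐ f ⟶ P) (p : ∀ i, P ⟶ f i)
    (hιp : ∀ i, ι ≫ p i = Sigma.π f i) {J : Type*} {A : J → C} [HasCoproduct A]
    (r : ∀ j, A j ⟶ P) (hrp : ∀ j i, r j ≫ p i = 0) :
    ∃ ρ : P ⟶ ∐ f, ι ≫ ρ = 𝟙 _ ∧ ∀ j, r j ≫ ρ = 0 := by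
  obtain ⟨Q, q, hRq, hq⟩ := hwc (Sigma.desc r)
  have hrq : ∀ j, r j ≫ q = 0 := fun j => by simpa using Sigma.ι A j ≫= hRq
  choose p' hp' using fun i => hq (p i) (Sigma.hom_ext _ _ fun j => by simpa using hrp j i)
  obtain ⟨ret, hret⟩ := hN Q (ι ≫ q)
    (isPureMonoT_of_comp_eq_π _ p' fun i => by rw [Category.assoc, ← hp', hιp])
  exact ⟨q ≫ ret, by rwa [← Category.assoc],
    fun j => by rw [← Category.assoc, hrq, zero_comp]⟩

end Coordinates

section Sequences

variable {X M : C}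

noncomputable def partialSum [HasCoproduct fun _ : ULift.{v} ℕ => M] (b : ℕ → (X ⟶ M))
    (m : ℕ) : X ⟶ ∐ fun _ : ULift.{v} ℕ => M :=
  ∑ k ∈ Finset.range m, b k ≫ Sigma.ι (fun _ : ULift.{v} ℕ => M) (ULift.up k)

theorem partialSum_comp_π [HasCoproduct fun _ : ULift.{v} ℕ => M] (b : ℕ → (X ⟶ M))
    (m k : ℕ) :
    partialSum b m ≫ Sigma.π _ (ULift.up k) = if k < m then b k else 0 := by
  simp only [partialSum, Preadditive.sum_comp, Category.assoc, Sigma.ι_π, ULift.up.injEq]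
  simp [comp_ite, Finset.sum_ite_eq']

theorem exists_sub_partialSum_mem_ppDefinable [HasBinaryBiproducts C] [HasCoproducts.{v} C]
    (hwc : HasWeakCokernels C) (hM : IsPureInjectiveT (∐ fun _ : ULift.{v} ℕ => M))
    {Z : ℕ → C} (α : ∀ m, X ⟶ Z m) (b : ℕ → (X ⟶ M))
    (hb : ∀ m k, m ≤ k → b k ∈ ppDefinable M (α m)) :
    ∃ x, ∀ m, x - partialSum b m ∈ ppDefinable _ (α m) := by
  classical
  choose g hg using hb
  let g' (m k : ℕ) : Z m ⟶ M := if h : m ≤ k then g m k h else 0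
  -- `P` is generated by `∐ M`, the unknown `x` (summand `X`) and the witnesses (summands `Z m`),
  -- subject to the relations `r m`; `p k` is the `k`-th coordinate of the finite solutions
  -- `x = partialSum b K`, `K > k`.
  let P := (∐ fun _ : ULift.{v} ℕ => M) ⊞ (X ⊞ ∐ fun m : ULift.{v} ℕ => Z m.down)
  let c : X ⟶ P := biprod.inl ≫ biprod.inr
  let z (m : ℕ) : Z m ⟶ P := Sigma.ι (fun m : ULift.{v} ℕ => Z m.down) ⟨m⟩ ≫ biprod.inr ≫
    biprod.inr
  let p (k : ULift.{v} ℕ) : P ⟶ M :=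
    biprod.desc (Sigma.π _ k) (biprod.desc (b k.down) (Sigma.desc fun m => g' m.down k.down))
  let r (m : ULift.{v} ℕ) : X ⟶ P := c - partialSum b m.down ≫ biprod.inl - α m.down ≫ z m.down
  have hrp : ∀ m k, r m ≫ p k = 0 := by
    rintro ⟨m⟩ ⟨k⟩
    simp only [r, c, z, p, Preadditive.sub_comp, Category.assoc, biprod.inr_desc,
      biprod.inl_desc, Sigma.ι_desc, partialSum_comp_π]
    by_cases hkm : k < m
    · simp [g', hkm, not_le.2 hkm]
    · simp only [g', hkm, dif_pos (not_lt.1 hkm), if_false]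
      rw [← hg, sub_zero, sub_self]
  obtain ⟨ρ, hιρ, hrρ⟩ := IsPureInjectiveT.exists_retraction hwc hM biprod.inl p
    (fun _ => biprod.inl_desc _ _) r hrp
  refine ⟨c ≫ ρ, fun m => ⟨z m ≫ ρ, ?_⟩⟩
  have hm := hrρ ⟨m⟩
  simp only [r, Preadditive.sub_comp, sub_sub, sub_eq_zero] at hm
  rw [hm, Preadditive.add_comp, Category.assoc, hιρ, Category.comp_id, Category.assoc,
    add_sub_cancel_left]

theorem exists_mem_ppDefinable_succ [HasBinaryBiproducts C] [HasCoproducts.{v} C]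
    (hwc : HasWeakCokernels C) (hX : IsCompactObj X)
    (hM : IsPureInjectiveT (∐ fun _ : ULift.{v} ℕ => M)) {Z : ℕ → C} (α : ∀ m, X ⟶ Z m)
    (b : ℕ → (X ⟶ M)) (hb : ∀ m k, m ≤ k → b k ∈ ppDefinable M (α m)) :
    ∃ m, b m ∈ ppDefinable M (α (m + 1)) := by
  obtain ⟨x, hx⟩ := exists_sub_partialSum_mem_ppDefinable hwc hM α b hb
  obtain ⟨⟨m⟩, hxm⟩ := hX.exists_comp_π_eq_zero x
  obtain ⟨t, ht⟩ := hx (m + 1)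
  refine ⟨m, -(t ≫ Sigma.π _ (ULift.up m)), ?_⟩
  have hcoord := ht =≫ Sigma.π _ (ULift.up m)
  rw [Preadditive.sub_comp, hxm, partialSum_comp_π, if_pos m.lt_succ_self, zero_sub,
    Category.assoc] at hcoord
  rw [Preadditive.comp_neg, ← hcoord, neg_neg]

end Sequences

theorem exists_strictAnti_subseq_of_not_stabilizes {α : Type*} [PartialOrder α] {S : ℕ → α}
    (hS : Antitone S) (h : ∀ N, ∃ n ≥ N, S n ≠ S N) :
    ∃ φ : ℕ → ℕ, Monotone φ ∧ ∀ m, S (φ (m + 1)) < S (φ m) := by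
  choose next hle hne using h
  have hstep (m : ℕ) : next^[m] 0 ≤ next^[m + 1] 0 := by
    rw [Function.iterate_succ_apply']
    exact hle _
  refine ⟨fun m => next^[m] 0, monotone_nat_of_le_succ hstep, fun m => ?_⟩
  refine lt_of_le_of_ne (hS (hstep m)) ?_
  simpa only [Function.iterate_succ_apply'] using hne _

end TriPurity

/-- Let `T` be a compactly generated triangulated category with all small
coproducts.  If `M` is Σ-pure-injective, then for every compact object `X` every
descending chain of pp-definable subgroups of `M` of sort `X` (images of
`Hom(Yₙ, M) → Hom(X, M)` along morphisms `aₙ : X ⟶ Yₙ` with `Yₙ` compact)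
eventually stabilises. -/
theorem stmt12 {C : Type u} [Category.{v} C] [Preadditive C] [HasZeroObject C]
    [HasShift C ℤ] [∀ n : ℤ, (CategoryTheory.shiftFunctor C n).Additive]
    [Pretriangulated C] [HasCoproducts.{v} C]
    (hgen : CompactlyGenerated C)
    (M : C) (hM : IsSigmaPureInjectiveT M)
    (X : C) (hX : IsCompactObj X)
    (Y : ℕ → C) (hY : ∀ n, IsCompactObj (Y n))
    (a : ∀ n, X ⟶ Y n)
    (hdesc : ∀ n, {g : X ⟶ M | ∃ f : Y (n + 1) ⟶ M, g = a (n + 1) ≫ f} ⊆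
      {g : X ⟶ M | ∃ f : Y n ⟶ M, g = a n ≫ f}) :
    ∃ N : ℕ, ∀ n ≥ N, {g : X ⟶ M | ∃ f : Y n ⟶ M, g = a n ≫ f} =
      {g : X ⟶ M | ∃ f : Y N ⟶ M, g = a N ≫ f} := by
  change ∃ N : ℕ, ∀ n ≥ N, ppDefinable M (a n) = ppDefinable M (a N)
  have hanti : Antitone fun n => ppDefinable M (a n) := antitone_nat_of_succ_le hdesc
  by_contra! hne
  obtain ⟨φ, hφ, hlt⟩ := exists_strictAnti_subseq_of_not_stabilizes hanti hne
  choose b hb hb' using fun m => Set.exists_of_ssubset (hlt m)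
  obtain ⟨m, hm⟩ := exists_mem_ppDefinable_succ Pretriangulated.hasWeakCokernels hX
    (hM (ULift ℕ)) (fun m => a (φ m)) b fun m k hmk => hanti (hφ hmk) (hb k)
  exact hb' m hm
end

section
/- Every indecomposable Σ-pure-injective module over the Laurent polynomial ring k[T,T⁻¹] (k a field) is isomorphic to one of: an indecomposable finite-dimensional module, a Prüfer module (the injective envelope of a simple module), or the field of rational functions k(T). -/
universe v

section

variable (R : Type v) [Ring R]

/-- A pure monomorphism of left `R`-modules (standard equational characterisation). -/
def IsPureMono {N P : Type v} [AddCommGroup N] [Module R N] [AddCommGroup P] [Module R P]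
    (f : N →ₗ[R] P) : Prop :=
  Function.Injective f ∧
    ∀ (p q : ℕ) (A : Matrix (Fin p) (Fin q) R) (n : Fin p → N),
      (∃ x : Fin q → P, ∀ i, ∑ j, A i j • x j = f (n i)) →
      ∃ y : Fin q → N, ∀ i, ∑ j, A i j • y j = n i

/-- A left `R`-module `M` is pure-injective if it is injective with respect to pure
monomorphisms. -/
def IsPureInjectiveModule (M : Type v) [AddCommGroup M] [Module R M] : Prop :=
  ∀ (N P : Type v) (_ : AddCommGroup N) (_ : Module R N) (_ : AddCommGroup P)
    (_ : Module R P) (f : N →ₗ[R] P), IsPureMono R f →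
      ∀ g : N →ₗ[R] M, ∃ h : P →ₗ[R] M, h.comp f = g

/-- `M` is Σ-pure-injective if every direct sum of copies of `M` is pure-injective. -/
def IsSigmaPureInjectiveModule (M : Type v) [AddCommGroup M] [Module R M] : Prop :=
  ∀ I : Type v, IsPureInjectiveModule R (Π₀ _ : I, M)

end

/-!
Since `⊕ M → ∏ M` is pure, Σ-pure-injectivity gives a retraction `h : ∏ M → ⊕ M`. If
`cₙ ∈ σₙ • M` with `σₙ ∣ σₙ₊₁`, then `h (cₙ)ₙ` agrees with `(cₙ)ₙ` modulo `σ_N • ⊕ M` in the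
first `N` coordinates, so at a coordinate `j` outside its finite support `cⱼ ∈ σⱼ₊₁ • M`. Hence
the chain of subgroups `r • M` cannot descend forever and `r • M` is divisible for some `r ≠ 0`.
Over a PID divisible submodules are injective, hence summands: either `r • M = 0` or `M` is
divisible.

If `r • M = 0`, indecomposability forces `p ^ n • M = 0` for a prime `p`; a cyclic submodule of
maximal order then has a complement, so `M` is cyclic, a quotient of `k[T,T⁻¹] ⧸ (p ^ n)`, which
is finite-dimensional because `k[T,T⁻¹]` is a one-dimensional Noetherian `k`-algebra of finite
type. If `M` is divisible with torsion, its `p`-primary part is a divisible summand, hence all of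
`M`, and the socle `{z | p • z = 0}` is the simple module `R ∙ y`: a second socle element would
lie in a maximal submodule avoiding `R ∙ y`, and such a submodule is divisible. If `M` is
divisible and torsion-free, the map `k(T) → M`, `1 ↦ x`, is injective with divisible image,
hence an isomorphism.
-/

theorem exists_le_maximal_disjoint {α : Type*} [CompleteLattice α] [IsCompactlyGenerated α]
    {a b : α} (h : Disjoint a b) : ∃ c, a ≤ c ∧ Maximal (Disjoint · b) c := by
  obtain ⟨c, hac, hc⟩ := zorn_le_nonempty₀ {c | Disjoint c b} (fun s hs hchain c hc =>
    ⟨sSup s, (hchain.directedOn.disjoint_sSup_left).mpr hs, fun _ => le_sSup⟩) a h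
  exact ⟨c, hac, hc⟩

theorem Submodule.mem_of_isCoprime {R M : Type*} [CommSemiring R] [AddCommMonoid M] [Module R M]
    {N : Submodule R M} {a b : R} (hab : IsCoprime a b) {m : M} (ha : a • m ∈ N)
    (hb : b • m ∈ N) : m ∈ N := by
  obtain ⟨u, v, huv⟩ := hab
  rw [← one_smul R m, ← huv, add_smul, mul_smul, mul_smul]
  exact N.add_mem (N.smul_mem u ha) (N.smul_mem v hb)

theorem exists_pow_smul_notMem {R M : Type*} [Monoid R] [MulAction R M] {N : Set M} {p : R}
    {m : M} (hm : m ∉ N) {k : ℕ} (hk : p ^ k • m ∈ N) :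
    ∃ j : ℕ, p ^ j • m ∉ N ∧ p • p ^ j • m ∈ N := by
  induction k with
  | zero => exact absurd (by simpa using hk) hm
  | succ k ih =>
    by_cases hkN : p ^ k • m ∈ N
    · exact ih hkN
    · exact ⟨k, hkN, by rwa [smul_smul, ← pow_succ']⟩

theorem Submodule.isCompl_torsionBy_of_isCoprime {R M : Type*} [CommRing R] [AddCommGroup M]
    [Module R M] {a b : R} (hab : IsCoprime a b) (h : ∀ m : M, (a * b) • m = 0) :
    IsCompl (torsionBy R M a) (torsionBy R M b) := by
  refine ⟨Submodule.disjoint_def.mpr fun m ha hb => ?_, Submodule.codisjoint_iff_exists_add_eq.mpr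
    fun m => ?_⟩
  · exact (Submodule.mem_bot R).mp <| Submodule.mem_of_isCoprime hab (by simpa using ha)
      (by simpa using hb)
  · obtain ⟨u, v, huv⟩ := hab
    refine ⟨(v * b) • m, (u * a) • m, ?_, ?_, ?_⟩
    · rw [Submodule.mem_torsionBy_iff, smul_smul, show a * (v * b) = v * (a * b) by ring,
        mul_smul, h, smul_zero]
    · rw [Submodule.mem_torsionBy_iff, smul_smul, show b * (u * a) = u * (a * b) by ring,
        mul_smul, h, smul_zero]
    · rw [← add_smul, add_comm, huv, one_smul]

theorem Submodule.mem_torsion'_powers_iff {R M : Type*} [CommSemiring R] [AddCommMonoid M]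
    [Module R M] {p : R} {m : M} :
    m ∈ torsion' R M (Submonoid.powers p) ↔ ∃ k : ℕ, p ^ k • m = 0 :=
  ⟨fun ⟨⟨_, k, hk⟩, h⟩ => ⟨k, by subst hk; exact h⟩, fun ⟨k, h⟩ => ⟨⟨p ^ k, k, rfl⟩, h⟩⟩

def Submodule.IsDivisible {R M : Type*} [Semiring R] [AddCommMonoid M] [Module R M]
    (D : Submodule R M) : Prop :=
  ∀ r : R, r ≠ 0 → ∀ m ∈ D, ∃ n ∈ D, r • n = m

section PID

variable {R : Type*} [CommRing R] [IsPrincipalIdealRing R]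
variable {M : Type*} [AddCommGroup M] [Module R M]

open Submodule

theorem Module.Baer.of_forall_exists_smul_eq (h : ∀ r : R, r ≠ 0 → ∀ m : M, ∃ n, r • n = m) :
    Module.Baer R M := by
  intro I g
  obtain ⟨a, rfl⟩ := (IsPrincipalIdealRing.principal I).principal
  by_cases ha : a = 0
  · subst ha
    refine ⟨0, fun x hx => ?_⟩
    obtain rfl : x = 0 := by simpa using hx
    exact g.map_zero.symm
  · obtain ⟨n, hn⟩ := h a ha (g ⟨a, mem_span_singleton_self a⟩)
    refine ⟨LinearMap.toSpanSingleton R M n, fun x hx => ?_⟩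
    obtain ⟨c, rfl⟩ := mem_span_singleton.mp hx
    have : (⟨c • a, hx⟩ : span R {a}) = c • ⟨a, mem_span_singleton_self a⟩ := rfl
    rw [this, g.map_smul, ← hn, LinearMap.toSpanSingleton_apply, smul_assoc]

theorem Submodule.IsDivisible.exists_isCompl {D : Submodule R M} (hD : D.IsDivisible) :
    ∃ C : Submodule R M, IsCompl D C := by
  have hbaer : Module.Baer R D := .of_forall_exists_smul_eq fun r hr m => by
    obtain ⟨n, hn, hrn⟩ := hD r hr m m.2
    exact ⟨⟨n, hn⟩, Subtype.ext hrn⟩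
  obtain ⟨ρ, hρ⟩ := hbaer.extension_property D.subtype Subtype.val_injective LinearMap.id
  exact ⟨_, LinearMap.isCompl_of_proj (f := ρ) fun d => LinearMap.congr_fun hρ d⟩

theorem Submodule.IsDivisible.eq_bot_or_eq_top
    (hind : ∀ A B : Submodule R M, IsCompl A B → A = ⊥ ∨ B = ⊥)
    {D : Submodule R M} (hD : D.IsDivisible) : D = ⊥ ∨ D = ⊤ := by
  obtain ⟨C, hDC⟩ := hD.exists_isCompl
  exact (hind D C hDC).imp id fun hC : C = ⊥ => eq_top_of_isCompl_bot (hC ▸ hDC)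

end PID

section DomainPID

variable {R : Type*} [CommRing R] [IsDomain R] [IsPrincipalIdealRing R]
variable {M : Type*} [AddCommGroup M] [Module R M]

open Submodule

theorem exists_prime_smul_eq_zero {x : M} (hx : x ≠ 0) {r : R} (hr : r ≠ 0) (hrx : r • x = 0) :
    ∃ p : R, Prime p ∧ ∃ y : M, y ≠ 0 ∧ p • y = 0 := by
  obtain ⟨a, ha⟩ := (IsPrincipalIdealRing.principal (R ∙ x).annihilator).principal
  have hmem : ∀ s : R, s • x = 0 ↔ a ∣ s := fun s => by
    rw [← Ideal.mem_span_singleton, ← Ideal.submodule_span_eq, ← ha,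
      mem_annihilator_span_singleton]
  have ha0 : a ≠ 0 := by rintro rfl; exact hr (zero_dvd_iff.mp ((hmem r).mp hrx))
  have hau : ¬IsUnit a := fun hu => hx (by simpa using (hmem 1).mpr hu.dvd)
  obtain ⟨p, hp, b, rfl⟩ := WfDvdMonoid.exists_irreducible_factor hau ha0
  refine ⟨p, hp.prime, b • x, fun hbx => hp.not_isUnit ?_, by rw [smul_smul, (hmem _).mpr dvd_rfl]⟩
  have hb0 : b ≠ 0 := right_ne_zero_of_mul ha0
  exact isUnit_of_dvd_one <| (mul_dvd_mul_iff_right hb0).mp (by simpa using (hmem b).mp hbx)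

theorem Submodule.isDivisible_of_prime {p : R} (hp : Prime p) {D : Submodule R M}
    (htors : ∀ m ∈ D, ∃ k : ℕ, p ^ k • m = 0) (hdiv : ∀ m ∈ D, ∃ n ∈ D, p • n = m) :
    D.IsDivisible := by
  have hpow : ∀ j : ℕ, ∀ m ∈ D, ∃ n ∈ D, p ^ j • n = m := by
    intro j
    induction j with
    | zero => exact fun m hm => ⟨m, hm, by simp⟩
    | succ j ih =>
      intro m hm
      obtain ⟨n₁, hn₁, rfl⟩ := hdiv m hm
      obtain ⟨n, hn, rfl⟩ := ih n₁ hn₁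
      exact ⟨n, hn, by rw [pow_succ', mul_smul]⟩
  intro r hr m hm
  obtain ⟨j, t, hpt, rfl⟩ := WfDvdMonoid.max_power_factor hr hp.irreducible
  obtain ⟨k, hk⟩ := htors m hm
  obtain ⟨u, v, huv⟩ := hp.irreducible.coprime_pow_of_not_dvd k hpt
  obtain ⟨n, hn, hpn⟩ := hpow j (u • m) (D.smul_mem u hm)
  have hum : (u * t) • m = m := by
    calc (u * t) • m = (u * t + v * p ^ k) • m := by rw [add_smul, mul_smul v, hk, smul_zero,
          add_zero]
    _ = m := by rw [huv, one_smul]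
  exact ⟨n, hn, by rw [mul_comm, mul_smul, hpn, smul_smul, mul_comm, hum]⟩

theorem exists_prime_pow_smul_eq_zero [Nontrivial M]
    (hind : ∀ A B : Submodule R M, IsCompl A B → A = ⊥ ∨ B = ⊥)
    {r : R} (hr : r ≠ 0) (hrM : ∀ m : M, r • m = 0) :
    ∃ p : R, Prime p ∧ ∃ n : ℕ, ∀ m : M, p ^ n • m = 0 := by
  obtain ⟨x, hx⟩ := exists_ne (0 : M)
  obtain ⟨p, hp, y, hy, hpy⟩ := exists_prime_smul_eq_zero hx hr (hrM x)
  obtain ⟨e, t, hpt, rfl⟩ := WfDvdMonoid.max_power_factor hr hp.irreducible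
  have hcompl := isCompl_torsionBy_of_isCoprime
    (hp.irreducible.coprime_pow_of_not_dvd e hpt).symm hrM
  have hyt : y ∉ torsionBy R M t := fun hyt => hy <| (mem_bot R).mp <|
    mem_of_isCoprime ((hp.irreducible.coprime_iff_not_dvd).mpr hpt)
      (by simpa using hpy) (by simpa using hyt)
  refine ⟨p, hp, e, fun m => ?_⟩
  rcases hind _ _ hcompl with h | h
  · rw [h] at hcompl
    exact absurd ((eq_top_of_bot_isCompl hcompl).symm ▸ mem_top) hyt
  · rw [h] at hcompl
    exact (mem_torsionBy_iff _ _).mp ((eq_top_of_isCompl_bot hcompl).symm ▸ mem_top)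

theorem exists_notMem_sup_smul_mem {p : R} (hp : Prime p) {n : ℕ}
    (hn : ∀ m : M, p ^ (n + 1) • m = 0) {x : M} (hx : p ^ n • x ≠ 0) {C : Submodule R M}
    (hC : Disjoint C (R ∙ x)) {m : M} (hm : m ∉ C ⊔ R ∙ x) (hpm : p • m ∈ C ⊔ R ∙ x) :
    ∃ m₁ ∉ C ⊔ R ∙ x, p • m₁ ∈ C := by
  obtain ⟨c, hc, z, hz, hca⟩ := mem_sup.mp hpm
  obtain ⟨a, rfl⟩ := mem_span_singleton.mp hz
  obtain ⟨b, rfl⟩ : p ∣ a := by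
    by_contra hpa
    have hax : (p ^ n * a) • x = 0 := by
      have hsum : p ^ n • c + (p ^ n * a) • x = 0 := by
        rw [mul_smul, ← smul_add, hca, smul_smul, ← pow_succ, hn]
      refine disjoint_def.mp hC _ ?_ (smul_mem _ _ (mem_span_singleton_self x))
      rw [eq_neg_of_add_eq_zero_right hsum]
      exact C.neg_mem (C.smul_mem _ hc)
    refine hx ((mem_bot R).mp (mem_of_isCoprime
      (hp.irreducible.coprime_iff_not_dvd.mpr hpa) ?_ ?_))
    · rw [smul_smul, ← pow_succ', hn]; exact zero_mem _
    · rw [smul_smul, mul_comm, hax]; exact zero_mem _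
  refine ⟨m - b • x, fun h => hm ?_, ?_⟩
  · simpa using add_mem h (mem_sup_right (smul_mem _ b
      (mem_span_singleton_self x)))
  · rwa [smul_sub, smul_smul, ← hca, add_sub_cancel_right]

theorem sup_span_singleton_eq_top_of_maximal {p : R} (hp : Prime p) {n : ℕ}
    (hn : ∀ m : M, p ^ (n + 1) • m = 0) {x : M} (hx : p ^ n • x ≠ 0) {C : Submodule R M}
    (hC : Maximal (Disjoint · (R ∙ x)) C) : C ⊔ R ∙ x = ⊤ := by
  by_contra hne
  obtain ⟨m₀, hm₀⟩ : ∃ m₀, m₀ ∉ C ⊔ R ∙ x := by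
    simpa [eq_top_iff'] using hne
  obtain ⟨j, hj, hpj⟩ := exists_pow_smul_notMem (N := ((C ⊔ R ∙ x : Submodule R M) : Set M))
    (p := p) hm₀ (k := n + 1) (by simp [hn])
  obtain ⟨m₁, hm₁, hpm₁⟩ := exists_notMem_sup_smul_mem hp hn hx hC.1 hj hpj
  refine hm₁ (mem_sup_left (hC.2 ?_ le_sup_left
    (mem_sup_right (mem_span_singleton_self m₁))))
  refine disjoint_def.mpr fun w hw hwx => ?_
  obtain ⟨c₁, hc₁, z, hz, rfl⟩ := mem_sup.mp hw
  obtain ⟨t, rfl⟩ := mem_span_singleton.mp hz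
  rcases hp.irreducible.isCoprime_or_dvd t with ht | ⟨s, rfl⟩
  · refine absurd (mem_of_isCoprime (ht.symm.pow_right (n := n + 1)) ?_ ?_) hm₁
    · rw [← add_sub_cancel_left c₁ (t • m₁)]
      exact sub_mem (mem_sup_right hwx) (mem_sup_left hc₁)
    · rw [hn]; exact zero_mem _
  · refine disjoint_def.mp hC.1 _ ?_ hwx
    rw [mul_comm, mul_smul]
    exact C.add_mem hc₁ (C.smul_mem s hpm₁)

theorem exists_span_singleton_eq_top [Nontrivial M]
    (hind : ∀ A B : Submodule R M, IsCompl A B → A = ⊥ ∨ B = ⊥)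
    {p : R} (hp : Prime p) {N : ℕ} (hN : ∀ m : M, p ^ N • m = 0) : ∃ x : M, R ∙ x = ⊤ := by
  obtain ⟨n, hn, x, hx⟩ : ∃ n : ℕ, (∀ m : M, p ^ (n + 1) • m = 0) ∧ ∃ x : M, p ^ n • x ≠ 0 := by
    induction N with
    | zero => exact absurd (subsingleton_of_forall_eq 0 (by simpa using hN)) (not_subsingleton M)
    | succ N ih =>
      by_cases h : ∀ m : M, p ^ N • m = 0
      · exact ih h
      · exact ⟨N, hN, not_forall.mp h⟩
  obtain ⟨C, -, hC⟩ := exists_le_maximal_disjoint (disjoint_bot_left (a := R ∙ x))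
  have hcompl : IsCompl C (R ∙ x) :=
    ⟨hC.1, codisjoint_iff.mpr (sup_span_singleton_eq_top_of_maximal hp hn hx hC)⟩
  rcases hind _ _ hcompl with h | h
  · exact ⟨x, eq_top_of_bot_isCompl (h ▸ hcompl)⟩
  · exact absurd (by rw [span_singleton_eq_bot.mp h, smul_zero]) hx

theorem isSimpleModule_span_singleton_of_prime_smul_eq_zero {p : R} (hp : Prime p) {y : M}
    (hy : y ≠ 0) (hpy : p • y = 0) : IsSimpleModule R (R ∙ y) := by
  have hle : Ideal.span {p} ≤ Ideal.torsionOf R M y :=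
    (Ideal.span_singleton_le_iff_mem _).mpr ((Ideal.mem_torsionOf_iff y p).mpr hpy)
  have hne : Ideal.torsionOf R M y ≠ ⊤ := by rwa [Ne, Ideal.torsionOf_eq_top_iff]
  have hmax := PrincipalIdealRing.isMaximal_of_irreducible hp.irreducible
  exact isSimpleModule_iff_quot_maximal.mpr
    ⟨_, hmax.eq_of_le hne hle ▸ hmax, ⟨(Ideal.quotTorsionOfEquivSpanSingleton R M y).symm⟩⟩

theorem exists_prime_smul_eq_of_maximal_disjoint
    (hdiv : ∀ r : R, r ≠ 0 → ∀ m : M, ∃ n, r • n = m) {p : R} (hp : Prime p)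
    (htors : ∀ m : M, ∃ k : ℕ, p ^ k • m = 0) {y : M} (hy : y ≠ 0) (hpy : p • y = 0)
    {C : Submodule R M} (hC : Maximal (Disjoint · (R ∙ y)) C) :
    ∀ c ∈ C, ∃ c' ∈ C, p • c' = c := by
  intro c hc
  obtain ⟨n, rfl⟩ := hdiv p hp.ne_zero c
  by_cases hd : Disjoint (C ⊔ R ∙ n) (R ∙ y)
  · exact ⟨n, hC.2 hd le_sup_left (mem_sup_right (mem_span_singleton_self n)),
      rfl⟩
  have hyle : R ∙ y ≤ C ⊔ R ∙ n :=
    ((isSimpleModule_iff_isAtom.mp (isSimpleModule_span_singleton_of_prime_smul_eq_zero hp hy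
      hpy)).not_disjoint_iff_le).mp fun h => hd h.symm
  obtain ⟨c₁, hc₁, z, hz, hyz⟩ :=
    mem_sup.mp (hyle (mem_span_singleton_self y))
  obtain ⟨a, rfl⟩ := mem_span_singleton.mp hz
  rcases hp.irreducible.isCoprime_or_dvd a with ha | ⟨b, rfl⟩
  · obtain ⟨k, hk⟩ := htors (p • n)
    obtain ⟨u, v, huv⟩ := ha.symm.pow_right (n := k)
    refine ⟨-(u • c₁), C.neg_mem (C.smul_mem u hc₁), ?_⟩
    have hac : a • p • n = -(p • c₁) := by
      rw [eq_neg_iff_add_eq_zero, add_comm, smul_comm, ← smul_add, hyz, hpy]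
    calc p • -(u • c₁) = u • -(p • c₁) := by rw [smul_neg, smul_neg, smul_comm]
    _ = (u * a + v * p ^ k) • p • n := by rw [← hac, add_smul, mul_smul, mul_smul v, hk,
          smul_zero, add_zero]
    _ = p • n := by rw [huv, one_smul]
  · refine absurd (disjoint_def.mp hC.1 y ?_ (mem_span_singleton_self y)) hy
    rw [← hyz, mul_comm, mul_smul]
    exact C.add_mem hc₁ (C.smul_mem b hc)

theorem mem_span_singleton_of_prime_smul_eq_zero
    (hind : ∀ A B : Submodule R M, IsCompl A B → A = ⊥ ∨ B = ⊥)
    (hdiv : ∀ r : R, r ≠ 0 → ∀ m : M, ∃ n, r • n = m) {p : R} (hp : Prime p)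
    (htors : ∀ m : M, ∃ k : ℕ, p ^ k • m = 0) {y : M} (hy : y ≠ 0) (hpy : p • y = 0)
    {z : M} (hpz : p • z = 0) : z ∈ R ∙ y := by
  by_contra hzy
  have hz : z ≠ 0 := by rintro rfl; exact hzy (zero_mem _)
  have hdisj : Disjoint (R ∙ z) (R ∙ y) :=
    (isSimpleModule_iff_isAtom.mp (isSimpleModule_span_singleton_of_prime_smul_eq_zero hp hz
      hpz)).not_le_iff_disjoint.mp (by rwa [span_singleton_le_iff_mem])
  obtain ⟨C, hzC, hC⟩ := exists_le_maximal_disjoint hdisj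
  have hCdiv : C.IsDivisible := isDivisible_of_prime hp (fun m _ => htors m)
    (exists_prime_smul_eq_of_maximal_disjoint hdiv hp htors hy hpy hC)
  rcases hCdiv.eq_bot_or_eq_top hind with h | h
  · exact hz ((mem_bot R).mp (h ▸ hzC (mem_span_singleton_self z)))
  · exact hy (disjoint_def.mp hC.1 y (h ▸ mem_top)
      (mem_span_singleton_self y))

theorem exists_isSimpleModule_essential
    (hind : ∀ A B : Submodule R M, IsCompl A B → A = ⊥ ∨ B = ⊥)
    (hdiv : ∀ r : R, r ≠ 0 → ∀ m : M, ∃ n, r • n = m) {x : M} (hx : x ≠ 0) {r : R}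
    (hr : r ≠ 0) (hrx : r • x = 0) :
    ∃ S : Submodule R M, IsSimpleModule R S ∧ ∀ N : Submodule R M, N ≠ ⊥ → S ⊓ N ≠ ⊥ := by
  obtain ⟨p, hp, y, hy, hpy⟩ := exists_prime_smul_eq_zero hx hr hrx
  have hprimary : (torsion' R M (Submonoid.powers p)).IsDivisible := by
    refine isDivisible_of_prime hp (fun m => mem_torsion'_powers_iff.mp)
      fun m hm => ?_
    obtain ⟨k, hk⟩ := mem_torsion'_powers_iff.mp hm
    obtain ⟨n, rfl⟩ := hdiv p hp.ne_zero m
    exact ⟨n, mem_torsion'_powers_iff.mpr ⟨k + 1, by rwa [pow_succ, mul_smul]⟩, rfl⟩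
  have htors : ∀ m : M, ∃ k : ℕ, p ^ k • m = 0 := by
    rcases hprimary.eq_bot_or_eq_top hind with h | h
    · refine absurd ((mem_bot R).mp (h ▸ ?_)) hy
      exact mem_torsion'_powers_iff.mpr ⟨1, by rwa [pow_one]⟩
    · exact fun m => mem_torsion'_powers_iff.mp (h ▸ mem_top)
  refine ⟨R ∙ y, isSimpleModule_span_singleton_of_prime_smul_eq_zero hp hy hpy, fun N hN => ?_⟩
  obtain ⟨m, hmN, hm⟩ := N.ne_bot_iff.mp hN
  obtain ⟨k, hk⟩ := htors m
  obtain ⟨j, hj, hpj⟩ := exists_pow_smul_notMem (N := ({0} : Set M)) hm (k := k) hk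
  exact (Submodule.ne_bot_iff _).mpr ⟨p ^ j • m, ⟨mem_span_singleton_of_prime_smul_eq_zero hind
    hdiv hp htors hy hpy hpj, N.smul_mem _ hmN⟩, hj⟩

theorem nonempty_linearEquiv_fractionRing [Nontrivial M]
    (hind : ∀ A B : Submodule R M, IsCompl A B → A = ⊥ ∨ B = ⊥)
    (hdiv : ∀ r : R, r ≠ 0 → ∀ m : M, ∃ n, r • n = m)
    (htf : ∀ r : R, r ≠ 0 → ∀ m : M, r • m = 0 → m = 0) :
    Nonempty (M ≃ₗ[R] FractionRing R) := by
  obtain ⟨x, hx⟩ := exists_ne (0 : M)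
  have hunit : ∀ s : nonZeroDivisors R, IsUnit (algebraMap R (Module.End R M) s) := by
    intro s
    have hs : (s : R) ≠ 0 := nonZeroDivisors.coe_ne_zero s
    refine (Module.End.isUnit_iff _).mpr ⟨fun a b hab => sub_eq_zero.mp (htf s hs _ ?_), hdiv s hs⟩
    rw [smul_sub]
    exact sub_eq_zero.mpr hab
  set φ := IsLocalizedModule.lift (nonZeroDivisors R) (Algebra.linearMap R (FractionRing R))
    (LinearMap.toSpanSingleton R M x) hunit
  have hφ : ∀ r : R, φ (algebraMap R (FractionRing R) r) = r • x := fun r =>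
    IsLocalizedModule.lift_apply _ _ _ hunit r
  have hdivK : ∀ r : R, r ≠ 0 → ∀ q : FractionRing R,
      r • (q / algebraMap R (FractionRing R) r) = q := fun r hr q => by
    rw [Algebra.smul_def, mul_div_cancel₀ _ (IsFractionRing.to_map_ne_zero_of_mem_nonZeroDivisors
      (mem_nonZeroDivisors_of_ne_zero hr))]
  have hinj : Function.Injective φ := by
    refine (injective_iff_map_eq_zero φ).mpr fun q hq => ?_
    obtain ⟨a, s, hs, rfl⟩ := IsFractionRing.div_surjective (A := R) q
    have hs0 : s ≠ 0 := nonZeroDivisors.ne_zero hs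
    have hax : a • x = 0 := by rw [← hφ, ← hdivK s hs0 (algebraMap R _ a), map_smul, hq, smul_zero]
    obtain rfl : a = 0 := by_contra fun ha => hx (htf a ha x hax)
    simp
  have hrange : LinearMap.range φ = ⊤ := by
    refine ((show (LinearMap.range φ).IsDivisible from ?_).eq_bot_or_eq_top hind).resolve_left
      fun h => hx ?_
    · rintro r hr _ ⟨q, rfl⟩
      exact ⟨φ (q / algebraMap R _ r), LinearMap.mem_range_self _ _, by rw [← map_smul, hdivK r hr]⟩
    · have h1 := LinearMap.mem_range_self φ (algebraMap R _ 1)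
      rwa [h, hφ, one_smul, mem_bot] at h1
  exact ⟨(LinearEquiv.ofBijective φ ⟨hinj, LinearMap.range_eq_top.mp hrange⟩).symm⟩

end DomainPID

section SigmaPureInjective

variable {R : Type v} [Ring R] {M : Type v} [AddCommGroup M] [Module R M]

theorem isPureMono_coeFnLinearMap (I : Type v) :
    IsPureMono R (DFinsupp.coeFnLinearMap R : (Π₀ _ : I, M) →ₗ[R] I → M) := by
  classical
  refine ⟨DFunLike.coe_injective, fun p q A n ⟨x, hx⟩ => ?_⟩
  let S : Finset I := Finset.univ.biUnion fun i => (n i).support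
  refine ⟨fun j => DFinsupp.mk S fun c => x j c, fun i => DFinsupp.ext fun c => ?_⟩
  simp only [DFinsupp.finsetSum_apply, DFinsupp.smul_apply, DFinsupp.mk_apply]
  by_cases hc : c ∈ S
  · simpa [hc] using congrFun (hx i) c
  · have hnc : n i c = 0 := DFinsupp.notMem_support_iff.mp fun h =>
      hc (Finset.mem_biUnion.mpr ⟨i, Finset.mem_univ i, h⟩)
    simp [hc, hnc]

theorem IsSigmaPureInjectiveModule.exists_smul_eq (hM : IsSigmaPureInjectiveModule R M)
    {σ : ℕ → R} (hσ : ∀ n, σ n ∣ σ (n + 1)) {c : ℕ → M} (hc : ∀ n, ∃ m, σ n • m = c n) :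
    ∃ n m, σ (n + 1) • m = c n := by
  classical
  obtain ⟨h, hh⟩ := hM (ULift ℕ) _ _ _ _ _ _ _ (isPureMono_coeFnLinearMap _) LinearMap.id
  have hdvd : ∀ N i, N ≤ i → ∃ m, σ N • m = c i := fun N i hNi => by
    obtain ⟨t, ht⟩ := Nat.rel_of_forall_rel_succ_of_le (· ∣ ·) hσ hNi
    obtain ⟨m, hm⟩ := hc i
    exact ⟨t • m, by rw [← mul_smul, ← ht, hm]⟩
  choose w hw using hdvd
  let u : ULift.{v} ℕ → M := fun i => c i.down
  let trunc (N : ℕ) : Π₀ _ : ULift.{v} ℕ, M :=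
    DFinsupp.mk ((Finset.range N).map ⟨ULift.up, ULift.up_injective⟩) fun i => c i.1.down
  let tail (N : ℕ) : ULift.{v} ℕ → M := fun i => if hi : N ≤ i.down then w N i.down hi else 0
  have hsplit : ∀ N, h u = trunc N + σ N • h (tail N) := fun N => by
    have hu : u = DFinsupp.coeFnLinearMap R (trunc N) + σ N • tail N := by
      funext i
      by_cases hi : N ≤ i.down
      · simp [trunc, tail, u, hi, hw, Nat.not_lt.mpr hi]
      · simp [trunc, tail, u, hi, Nat.lt_of_not_le hi]
    rw [hu, map_add, map_smul, ← LinearMap.comp_apply, hh, LinearMap.id_apply]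
  obtain ⟨j, hj⟩ := Infinite.exists_notMem_finset ((h u).support.image ULift.down)
  have hj0 : h u ⟨j⟩ = 0 := DFinsupp.notMem_support_iff.mp fun hsupp =>
    hj (Finset.mem_image.mpr ⟨_, hsupp, rfl⟩)
  refine ⟨j, -h (tail (j + 1)) ⟨j⟩, ?_⟩
  have := congrArg (· ⟨j⟩) (hsplit (j + 1))
  rw [hj0, DFinsupp.add_apply, DFinsupp.smul_apply, DFinsupp.mk_apply, dif_pos (by simp)] at this
  rw [smul_neg, eq_neg_of_add_eq_zero_right this.symm, neg_neg]

end SigmaPureInjective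

open Pointwise in
theorem IsSigmaPureInjectiveModule.exists_isDivisible_smul_top {R : Type v} [CommRing R]
    [IsDomain R] {M : Type v} [AddCommGroup M] [Module R M] (hM : IsSigmaPureInjectiveModule R M) :
    ∃ r : R, r ≠ 0 ∧ (r • ⊤ : Submodule R M).IsDivisible := by
  by_contra! H
  have hstep : ∀ r : nonZeroDivisors R, ∃ s : nonZeroDivisors R, ∃ m : M,
      ∀ n : M, ((s * r : nonZeroDivisors R) : R) • n ≠ (r : R) • m := by
    intro r
    have := H r (nonZeroDivisors.coe_ne_zero r)
    simp only [Submodule.IsDivisible, Submodule.mem_smul_pointwise_iff_exists, Submodule.mem_top,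
      true_and] at this
    push Not at this
    obtain ⟨s, hs, _, ⟨m, rfl⟩, hm⟩ := this
    exact ⟨⟨s, mem_nonZeroDivisors_of_ne_zero hs⟩, m, fun n h => hm _ ⟨n, rfl⟩ (by
      rw [← h, Submonoid.coe_mul, mul_smul])⟩
  choose s m hm using hstep
  let σ : ℕ → nonZeroDivisors R := fun n => (fun r => s r * r)^[n] 1
  have hσ : ∀ n, σ (n + 1) = s (σ n) * σ n := fun n => Function.iterate_succ_apply' _ n 1
  obtain ⟨n, m', hm'⟩ := hM.exists_smul_eq (σ := fun n => (σ n : R))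
    (fun n => by rw [hσ, Submonoid.coe_mul]; exact dvd_mul_left _ _)
    (c := fun n => (σ n : R) • m (σ n)) fun n => ⟨_, rfl⟩
  exact hm (σ n) m' (hσ n ▸ hm')

theorem IsLocalization.isPrincipalIdealRing {R S : Type*} [CommRing R] [CommRing S] [Algebra R S]
    (T : Submonoid R) [IsLocalization T S] [IsPrincipalIdealRing R] : IsPrincipalIdealRing S := by
  refine ⟨fun J => ⟨⟨algebraMap R S (Submodule.IsPrincipal.generator (J.under R)), ?_⟩⟩⟩
  conv_lhs => rw [← IsLocalization.map_under T S J,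
    ← Ideal.span_singleton_generator (J.under R), Ideal.map_span, Set.image_singleton]

instance LaurentPolynomial.isPrincipalIdealRing (k : Type*) [Field k] :
    IsPrincipalIdealRing (LaurentPolynomial k) :=
  IsLocalization.isPrincipalIdealRing (Submonoid.powers (Polynomial.X : Polynomial k))

theorem Module.finite_quotient_span_singleton (k : Type*) {R : Type*} [CommRing k]
    [IsJacobsonRing k] [CommRing R] [Algebra k R] [Algebra.FiniteType k R] [IsNoetherianRing R]
    [Ring.KrullDimLE 1 R] {g : R} (hg : g ∈ nonZeroDivisors R) :
    Module.Finite k (R ⧸ Ideal.span {g}) := by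
  have : IsArtinian R (R ⧸ Ideal.span {g}) :=
    (isFiniteLength_iff_isNoetherian_isArtinian.mp (isFiniteLength_quotient_span_singleton R hg)).2
  have : IsArtinianRing (R ⧸ Ideal.span {g}) := isArtinian_of_tower R inferInstance
  exact Module.finite_of_isArtinianRing k _

theorem Module.Finite.of_span_singleton_eq_top_of_smul_eq_zero {k R M : Type*} [CommSemiring k]
    [CommRing R] [Algebra k R] [AddCommGroup M] [Module R M] [Module k M] [IsScalarTower k R M]
    {g : R} [Module.Finite k (R ⧸ Ideal.span {g})] {x : M} (hx : R ∙ x = ⊤) (hgx : g • x = 0) :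
    Module.Finite k M := by
  let f := (Ideal.span {g}).liftQ (LinearMap.toSpanSingleton R M x) <| by
    rw [Ideal.span_le, Set.singleton_subset_iff]
    exact hgx
  have hf : Function.Surjective f := by
    rw [← LinearMap.range_eq_top, Submodule.range_liftQ, ← LinearMap.span_singleton_eq_range, hx]
  exact Module.Finite.of_surjective (f.restrictScalars k) hf

/-- Every indecomposable Σ-pure-injective module `M` over the Laurent
polynomial ring `k[T,T⁻¹]` (`k` a field) is isomorphic to one of: an indecomposable
finite-dimensional module; a Prüfer module (an injective module which is an injective
envelope of a simple submodule, i.e. has an essential simple submodule); or the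
function field `k(T)`, the fraction field of `k[T,T⁻¹]`. -/
theorem stmt16 (k : Type v) [Field k]
    (M : Type v) [AddCommGroup M] [Module (LaurentPolynomial k) M]
    (hind : Nontrivial M ∧ ∀ A B : Submodule (LaurentPolynomial k) M,
      IsCompl A B → A = ⊥ ∨ B = ⊥)
    (hsigma : IsSigmaPureInjectiveModule (LaurentPolynomial k) M) :
    -- finite-dimensional case
    (∃ (N : Type v) (_ : AddCommGroup N) (_ : Module (LaurentPolynomial k) N)
        (_ : Module k N) (_ : IsScalarTower k (LaurentPolynomial k) N)
        (_ : FiniteDimensional k N), Nonempty (M ≃ₗ[LaurentPolynomial k] N)) ∨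
    -- Prüfer case: `M` is the injective envelope of a simple module
    (Module.Injective (LaurentPolynomial k) M ∧
      ∃ S : Submodule (LaurentPolynomial k) M, IsSimpleModule (LaurentPolynomial k) ↥S ∧
        ∀ N : Submodule (LaurentPolynomial k) M, N ≠ ⊥ → S ⊓ N ≠ ⊥) ∨
    -- function field case
    Nonempty (M ≃ₗ[LaurentPolynomial k] FractionRing (LaurentPolynomial k)) := by
  obtain ⟨_, hind⟩ := hind
  obtain ⟨r, hr, hD⟩ := hsigma.exists_isDivisible_smul_top
  rcases hD.eq_bot_or_eq_top hind with hbot | htop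
  · have hrM : ∀ m : M, r • m = 0 := fun m =>
      (Submodule.mem_bot _).mp (hbot ▸ Submodule.smul_mem_pointwise_smul m r ⊤ trivial)
    obtain ⟨p, hp, n, hn⟩ := exists_prime_pow_smul_eq_zero hind hr hrM
    obtain ⟨x, hx⟩ := exists_span_singleton_eq_top hind hp hn
    let : Module k M := Module.compHom M (algebraMap k (LaurentPolynomial k))
    have : IsScalarTower k (LaurentPolynomial k) M := .of_algebraMap_smul fun _ _ => rfl
    have : Module.Finite k (LaurentPolynomial k ⧸ Ideal.span {p ^ n}) :=
      Module.finite_quotient_span_singleton k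
        (mem_nonZeroDivisors_of_ne_zero (pow_ne_zero n hp.ne_zero))
    exact .inl ⟨M, _, _, _, ‹_›, .of_span_singleton_eq_top_of_smul_eq_zero hx (hn x),
      ⟨LinearEquiv.refl _ _⟩⟩
  have hdiv : ∀ s : LaurentPolynomial k, s ≠ 0 → ∀ m : M, ∃ n, s • n = m := fun s hs m =>
    let ⟨n, _, hn⟩ := hD s hs m (by rw [htop]; trivial)
    ⟨n, hn⟩
  by_cases htors : ∃ x : M, x ≠ 0 ∧ ∃ s : LaurentPolynomial k, s ≠ 0 ∧ s • x = 0
  · obtain ⟨x, hx, s, hs, hsx⟩ := htors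
    exact .inr <| .inl ⟨(Module.Baer.of_forall_exists_smul_eq hdiv).injective,
      exists_isSimpleModule_essential hind hdiv hx hs hsx⟩
  · exact .inr <| .inr <| nonempty_linearEquiv_fractionRing hind hdiv fun s hs m hsm =>
      by_contra fun hm => htors ⟨m, hm, s, hs, hsm⟩
end
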